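/- Let r > 0. As ε → 0⁺, (3/(4πr³)) · (C₁₁(ε) − C₁₂(ε)) − (3/(2r²)) · [log(r/ε) + 2γ + 2 log 2] = O(√ε), where γ is the Euler–Mascheroni constant. -/

import Mathlib

open Real Filter Topology

/-- The parameter α̃(ε) = √(ε(r + ε/4)) for two identical spheres of radius `r`. -/
noncomputable def alphaTilde (r ε : ℝ) : ℝ := Real.sqrt (ε * (r + ε / 4))

/-- The bispherical coordinate ξ₀(ε) = arsinh(α̃(ε)/r) of the sphere boundaries. -/
noncomputable def xi0 (r ε : ℝ) : ℝ := Real.arsinh (alphaTilde r ε / r)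

/-- The capacitance coefficient C₁₁ for two identical spheres of radius `r`. -/
noncomputable def C11sym (r ε : ℝ) : ℝ :=
  8 * π * alphaTilde r ε *
    ∑' n : ℕ, Real.exp ((2 * n + 1) * xi0 r ε) /
      (Real.exp (2 * (2 * n + 1) * xi0 r ε) - 1)

/-- The capacitance coefficient C₁₂ for two identical spheres of radius `r`. -/
noncomputable def C12sym (r ε : ℝ) : ℝ :=
  -(8 * π * alphaTilde r ε *
    ∑' n : ℕ, 1 / (Real.exp (2 * (2 * n + 1) * xi0 r ε) - 1))

/-!
Put ξ = ξ₀(ε). Then α̃ = r sinh ξ, sinh² (ξ/2) = ε/(4r) and C₁₁ − C₁₂ = 8πα̃ S(ξ), where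
S(ξ) = ∑ₖ 1/(e^{(2k+1)ξ} − 1) (`oddExpSum`); so the claim becomes
|2 sinh ξ · S(ξ) + log sinh (ξ/2) − γ| = O(ξ).

Write 1/(e^y − 1) = e^{-y}/y + e^{-y} − u(y), where u(y) = e^{-y} (1/y − 1/(e^y − 1))
(`boseCorrection`) is antitone with values in [0, 1]. Over the odd multiples y = (2k+1)ξ the
first two pieces sum in closed form, to artanh(e^{-ξ})/ξ = (log cosh (ξ/2) − log sinh (ξ/2))/(2ξ)
and to 1/(2 sinh ξ), while 2ξ ∑ₖ u((2k+1)ξ) is a midpoint Riemann sum of ∫₀^∞ u = 1 − γ with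
error at most 2ξ. That integral is computed by expanding 1/(e^t − 1) − e^{-t}/t into a series of
Frullani integrals, whose values 1/(m+1) − log ((m+2)/(m+1)) sum to γ.
-/

open MeasureTheory Set

theorem exp_sub_one_pos {t : ℝ} (ht : 0 < t) : 0 < exp t - 1 :=
  sub_pos.mpr (Real.one_lt_exp_iff.mpr ht)

theorem one_div_exp_sub_one_le_one_div {t : ℝ} (ht : 0 < t) : 1 / (exp t - 1) ≤ 1 / t :=
  one_div_le_one_div_of_le ht (by linarith [Real.add_one_le_exp t])

theorem integral_Ioi_comp_add_right (f : ℝ → ℝ) (a c : ℝ) :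
    ∫ x in Ioi a, f (x + c) = ∫ x in Ioi (a + c), f x := by
  simpa [preimage_add_const_Ioi] using
    (measurePreserving_add_right volume c).setIntegral_preimage_emb
      (measurableEmbedding_addRight c) f (Ioi (a + c))

theorem integrableOn_Ioi_comp_add_right_iff (f : ℝ → ℝ) (a c : ℝ) :
    IntegrableOn (fun x => f (x + c)) (Ioi a) ↔ IntegrableOn f (Ioi (a + c)) := by
  simpa [preimage_add_const_Ioi, Function.comp_def] using
    (measurePreserving_add_right volume c).integrableOn_comp_preimage
      (measurableEmbedding_addRight c) (f := f) (s := Ioi (a + c))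

theorem AntitoneOn.summable_and_abs_two_mul_tsum_odd_sub_integral_le {f : ℝ → ℝ} {ξ M : ℝ}
    (hf : AntitoneOn f (Ioi 0)) (hint : IntegrableOn f (Ioi 0))
    (hnonneg : ∀ t ∈ Ioi 0, 0 ≤ f t) (hM : ∀ t ∈ Ioi 0, f t ≤ M) (hξ : 0 < ξ) :
    Summable (fun k : ℕ => f ((2 * k + 1) * ξ)) ∧
      |2 * ξ * ∑' k : ℕ, f ((2 * k + 1) * ξ) - ∫ t in Ioi 0, f t| ≤ 2 * ξ * M := by
  -- The integral test for `φ` gives `∫_ξ^∞ f ≤ 2ξ ∑ₖ f((2k+1)ξ) ≤ 2ξ f(ξ) + ∫_ξ^∞ f`.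
  set φ : ℝ → ℝ := fun s => f (2 * ξ * s + ξ) with hφ
  have hφ_odd : ∀ k : ℕ, φ k = f ((2 * k + 1) * ξ) := fun k => by simp only [hφ]; ring_nf
  have hφ_anti : AntitoneOn φ (Ici 0) := fun s hs t ht hst =>
    hf (by simp only [mem_Ioi, mem_Ici] at hs ⊢; positivity)
      (by simp only [mem_Ioi, mem_Ici] at ht ⊢; positivity) (by gcongr)
  have hφ_nonneg : ∀ s ∈ Ioi 0, 0 ≤ φ s := fun s hs =>
    hnonneg _ (by simp only [mem_Ioi] at hs ⊢; positivity)
  have h2ξ : 0 < 2 * ξ := by positivity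
  have hφ_int : IntegrableOn φ (Ioi 0) := by
    rw [hφ, integrableOn_Ioi_comp_mul_left_iff (fun x => f (x + ξ)) 0 h2ξ,
      integrableOn_Ioi_comp_add_right_iff]
    exact hint.mono_set (Ioi_subset_Ioi (by simp [hξ.le]))
  have hφ_integral : ∫ s in Ioi 0, φ s = (2 * ξ)⁻¹ * ∫ t in Ioi ξ, f t := by
    rw [hφ, integral_comp_mul_left_Ioi (fun x => f (x + ξ)) 0 h2ξ, integral_Ioi_comp_add_right]
    simp
  have hsum : Summable fun n : ℕ => φ n :=
    hφ_anti.summable_of_integrableOn_Ioi_zero hφ_int hφ_nonneg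
  have hup := hφ_anti.tsum_le_integral hφ_int hφ_nonneg
  have hlow := hφ_anti.integral_le_tsum hsum hφ_nonneg
  simp only [hφ_odd] at hsum hup hlow
  have hφ0 : φ 0 ≤ M := hM _ (by simpa using hξ)
  have hhead := intervalIntegral.integral_Ioi_sub_Ioi hint hξ.le
  have hhead_nonneg : 0 ≤ ∫ t in (0 : ℝ)..ξ, f t := by
    rw [intervalIntegral.integral_of_le hξ.le]
    exact setIntegral_nonneg measurableSet_Ioc fun t ht => hnonneg t ht.1
  have hhead_le : ∫ t in (0 : ℝ)..ξ, f t ≤ M * ξ := by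
    have := intervalIntegral.norm_integral_le_of_norm_le_const (a := 0) (b := ξ) (C := M)
      fun t ht => by
        rw [uIoc_of_le hξ.le] at ht
        rw [Real.norm_of_nonneg (hnonneg t ht.1)]
        exact hM t ht.1
    rw [Real.norm_eq_abs, sub_zero, abs_of_pos hξ] at this
    exact (le_abs_self _).trans this
  rw [hφ_integral] at hup hlow
  refine ⟨hsum, abs_le.mpr ⟨?_, ?_⟩⟩
  · have := mul_le_mul_of_nonneg_left hlow h2ξ.le
    rw [← mul_assoc, mul_inv_cancel₀ h2ξ.ne', one_mul] at this
    linarith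
  · have := mul_le_mul_of_nonneg_left hup h2ξ.le
    rw [mul_add, ← mul_assoc, mul_inv_cancel₀ h2ξ.ne', one_mul] at this
    linarith [mul_le_mul_of_nonneg_left hφ0 h2ξ.le]

theorem integrableOn_exp_neg_mul_Ioi {c : ℝ} (hc : 0 < c) :
    IntegrableOn (fun t => exp (-(c * t))) (Ioi 0) := by
  simpa only [neg_mul] using exp_neg_integrableOn_Ioi 0 hc

theorem integral_exp_neg_mul_Ioi {c : ℝ} (hc : 0 < c) : ∫ t in Ioi 0, exp (-(c * t)) = c⁻¹ := by
  simpa [neg_mul, div_neg, neg_div] using integral_exp_mul_Ioi (neg_neg_of_pos hc) 0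

theorem integrableOn_inv_mul_exp_neg_mul_sub {a b : ℝ} (ha : 0 < a) (hab : a ≤ b) :
    IntegrableOn (fun t => t⁻¹ * (exp (-(a * t)) - exp (-(b * t)))) (Ioi 0) := by
  refine Integrable.mono' ((integrableOn_exp_neg_mul_Ioi ha).const_mul (b - a)) ?_ ?_
  · exact (ContinuousOn.mul (continuousOn_inv₀.mono fun t ht => ne_of_gt ht)
      (by fun_prop)).aestronglyMeasurable measurableSet_Ioi
  · refine ae_restrict_of_forall_mem measurableSet_Ioi fun t (ht : 0 < t) => ?_
    have hsplit : exp (-(b * t)) = exp (-(a * t)) * exp (-((b - a) * t)) := by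
      rw [← Real.exp_add]; ring_nf
    have hgap : 1 - exp (-((b - a) * t)) ≤ (b - a) * t := by
      linarith [Real.add_one_le_exp (-((b - a) * t))]
    have hmono : exp (-(b * t)) ≤ exp (-(a * t)) := Real.exp_le_exp.mpr (by nlinarith)
    rw [Real.norm_of_nonneg (by positivity [sub_nonneg.mpr hmono]), inv_mul_le_iff₀ ht]
    calc exp (-(a * t)) - exp (-(b * t)) = exp (-(a * t)) * (1 - exp (-((b - a) * t))) := by
          rw [hsplit]; ring
      _ ≤ exp (-(a * t)) * ((b - a) * t) := mul_le_mul_of_nonneg_left hgap (Real.exp_pos _).le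
      _ = t * ((b - a) * exp (-(a * t))) := by ring

theorem integral_inv_mul_exp_neg_mul_sub {a b : ℝ} (ha : 0 < a) (hab : a ≤ b) :
    ∫ t in Ioi 0, t⁻¹ * (exp (-(a * t)) - exp (-(b * t))) = log (b / a) := by
  have hb : 0 < b := ha.trans_le hab
  have hcont : Continuous fun x : ℝ => exp (-x) := by fun_prop
  have hlim0 : Tendsto (fun x : ℝ => exp (-x)) (𝓝[>] 0) (𝓝 1) := by
    simpa using (hcont.tendsto 0).mono_left nhdsWithin_le_nhds
  have hlimTop : Tendsto (fun x : ℝ => exp (-x)) atTop (𝓝 0) :=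
    Real.tendsto_exp_atBot.comp tendsto_neg_atTop_atBot
  simpa using Frullani.integral_Ioi_eq (f := fun x : ℝ => exp (-x))
    (hcont.locallyIntegrable.locallyIntegrableOn _) ha hb hlim0
    hlimTop (integrableOn_inv_mul_exp_neg_mul_sub ha hab)

theorem hasSum_one_div_add_one_sub_log_div :
    HasSum (fun m : ℕ => 1 / ((m : ℝ) + 1) - log (((m : ℝ) + 2) / ((m : ℝ) + 1)))
      eulerMascheroniConstant := by
  have hnonneg : ∀ m : ℕ, 0 ≤ 1 / ((m : ℝ) + 1) - log (((m : ℝ) + 2) / ((m : ℝ) + 1)) := by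
    intro m
    have := Real.log_le_sub_one_of_pos (show 0 < ((m : ℝ) + 2) / ((m : ℝ) + 1) by positivity)
    have hsplit : ((m : ℝ) + 2) / ((m : ℝ) + 1) - 1 = 1 / ((m : ℝ) + 1) := by field_simp; ring
    linarith
  have hpartial : ∀ n : ℕ, ∑ m ∈ Finset.range n,
      (1 / ((m : ℝ) + 1) - log (((m : ℝ) + 2) / ((m : ℝ) + 1))) = eulerMascheroniSeq n := by
    intro n
    have hlog : ∀ m : ℕ,
        log (((m : ℝ) + 2) / ((m : ℝ) + 1)) = log ((m + 1 : ℕ) + 1) - log (m + 1) := by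
      intro m
      rw [Real.log_div (by positivity) (by positivity)]; push_cast; ring_nf
    simp only [hlog, Finset.sum_sub_distrib, eulerMascheroniSeq, harmonic,
      Finset.sum_range_sub (fun m : ℕ => log ((m : ℝ) + 1))]
    push_cast
    simp [one_div]
  rw [hasSum_iff_tendsto_nat_of_nonneg hnonneg]
  simpa only [hpartial] using tendsto_eulerMascheroniSeq

noncomputable def eulerTerm (m : ℕ) (t : ℝ) : ℝ :=
  exp (-((m + 1) * t)) - t⁻¹ * (exp (-((m + 1) * t)) - exp (-((m + 2) * t)))

theorem integrableOn_eulerTerm (m : ℕ) : IntegrableOn (eulerTerm m) (Ioi 0) :=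
  (integrableOn_exp_neg_mul_Ioi (by positivity)).sub
    (integrableOn_inv_mul_exp_neg_mul_sub (by positivity) (by linarith))

theorem integral_eulerTerm (m : ℕ) : ∫ t in Ioi 0, eulerTerm m t =
    1 / ((m : ℝ) + 1) - log (((m : ℝ) + 2) / ((m : ℝ) + 1)) := by
  unfold eulerTerm
  rw [integral_sub (integrableOn_exp_neg_mul_Ioi (by positivity))
    (integrableOn_inv_mul_exp_neg_mul_sub (by positivity) (by linarith)),
    integral_exp_neg_mul_Ioi (by positivity),
    integral_inv_mul_exp_neg_mul_sub (by positivity) (by linarith), one_div]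

theorem eulerTerm_nonneg (m : ℕ) {t : ℝ} (ht : 0 < t) : 0 ≤ eulerTerm m t := by
  have hsplit : exp (-((m + 2) * t)) = exp (-((m + 1) * t)) * exp (-t) := by
    rw [← Real.exp_add]; ring_nf
  have hgap : t⁻¹ * (1 - exp (-t)) ≤ 1 := by
    rw [inv_mul_le_iff₀ ht]; linarith [Real.add_one_le_exp (-t)]
  have : eulerTerm m t = exp (-((m + 1) * t)) * (1 - t⁻¹ * (1 - exp (-t))) := by
    rw [eulerTerm, hsplit]; ring
  rw [this]
  exact mul_nonneg (Real.exp_pos _).le (by linarith)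

theorem hasSum_eulerTerm {t : ℝ} (ht : 0 < t) :
    HasSum (fun m => eulerTerm m t) (1 / (exp t - 1) - exp (-t) / t) := by
  set q := exp (-t)
  have hq1 : q < 1 := Real.exp_lt_one_iff.mpr (by linarith)
  have hpow : ∀ m : ℕ, ∀ j : ℕ, exp (-((m + j) * t)) = q ^ j * q ^ m := fun m j => by
    rw [← Real.exp_nat_mul, ← Real.exp_nat_mul, ← Real.exp_add]; ring_nf
  have hgeom := hasSum_geometric_of_lt_one (Real.exp_pos _).le hq1
  have h1 := hgeom.mul_left (q ^ 1)
  have h2 := hgeom.mul_left (q ^ 2)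
  have hterm : (fun m => eulerTerm m t) =
      fun m => q ^ 1 * q ^ m - t⁻¹ * (q ^ 1 * q ^ m - q ^ 2 * q ^ m) := by
    funext m; rw [eulerTerm, ← hpow m 1, ← hpow m 2]; push_cast; ring_nf
  have hq : 1 - q ≠ 0 := by linarith
  have hinv : 1 / (exp t - 1) = q * (1 - q)⁻¹ := by
    have hexp : exp t * q = 1 := by rw [← Real.exp_add]; simp
    have := (exp_sub_one_pos ht).ne'
    field_simp
    linear_combination (-1) * hexp
  have hval : 1 / (exp t - 1) - q / t =
      q ^ 1 * (1 - q)⁻¹ - t⁻¹ * (q ^ 1 * (1 - q)⁻¹ - q ^ 2 * (1 - q)⁻¹) := by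
    rw [hinv]; field_simp
  rw [hterm, hval]
  exact h1.sub ((h1.sub h2).mul_left t⁻¹)

theorem integral_one_div_exp_sub_one_sub_exp_neg_div :
    ∫ t in Ioi 0, (1 / (exp t - 1) - exp (-t) / t) = eulerMascheroniConstant := by
  have hnorm : ∀ m : ℕ, ∫ t in Ioi 0, ‖eulerTerm m t‖ =
      1 / ((m : ℝ) + 1) - log (((m : ℝ) + 2) / ((m : ℝ) + 1)) := fun m => by
    rw [← integral_eulerTerm]
    exact setIntegral_congr_fun measurableSet_Ioi fun t ht =>
      Real.norm_of_nonneg (eulerTerm_nonneg m ht)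
  have hswap := integral_tsum_of_summable_integral_norm (fun m => integrableOn_eulerTerm m)
    (by simpa only [hnorm] using hasSum_one_div_add_one_sub_log_div.summable)
  rw [← setIntegral_congr_fun measurableSet_Ioi fun t ht => (hasSum_eulerTerm ht).tsum_eq,
    ← hswap, ← hasSum_one_div_add_one_sub_log_div.tsum_eq]
  simp only [integral_eulerTerm]

theorem mul_exp_half_le_exp_sub_one {t : ℝ} (ht : 0 ≤ t) : t * exp (t / 2) ≤ exp t - 1 := by
  have hsinh : t / 2 ≤ sinh (t / 2) := Real.self_le_sinh_iff.mpr (by linarith)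
  have hfactor : exp t - 1 = exp (t / 2) * (2 * sinh (t / 2)) := by
    rw [Real.sinh_eq, mul_comm, ← sub_eq_zero]
    have h1 : exp (t / 2) * exp (t / 2) = exp t := by rw [← Real.exp_add]; ring_nf
    have h2 : exp (t / 2) * exp (-(t / 2)) = 1 := by rw [← Real.exp_add]; simp
    linear_combination h2 - h1
  rw [hfactor, mul_comm t]
  exact mul_le_mul_of_nonneg_left (by linarith) (Real.exp_pos _).le

theorem antitoneOn_one_div_sub_one_div_exp_sub_one :
    AntitoneOn (fun t => 1 / t - 1 / (exp t - 1)) (Ioi 0) := by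
  have hderiv : ∀ t ∈ Ioi (0 : ℝ), HasDerivAt (fun t => 1 / t - 1 / (exp t - 1))
      (exp t / (exp t - 1) ^ 2 - 1 / t ^ 2) t := by
    intro t (ht : 0 < t)
    have h := (hasDerivAt_inv ht.ne').sub
      (((Real.hasDerivAt_exp t).sub_const 1).inv (exp_sub_one_pos ht).ne')
    simp only [one_div]
    exact h.congr_deriv (by ring)
  refine antitoneOn_of_deriv_nonpos (convex_Ioi 0)
    (fun t ht => (hderiv t ht).continuousAt.continuousWithinAt) (fun t ht => ?_) (fun t ht => ?_)
  · rw [interior_Ioi] at ht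
    exact (hderiv t ht).differentiableAt.differentiableWithinAt
  · rw [interior_Ioi] at ht
    have ht : 0 < t := ht
    have hE := exp_sub_one_pos ht
    -- `e^t/(e^t - 1)² ≤ 1/t²` is the square of `t e^{t/2} ≤ e^t - 1`.
    have key := mul_le_mul (mul_exp_half_le_exp_sub_one ht.le) (mul_exp_half_le_exp_sub_one ht.le)
      (by positivity) hE.le
    have hsq : exp (t / 2) ^ 2 = exp t := by rw [← Real.exp_nat_mul]; ring_nf
    rw [(hderiv t ht).deriv, sub_nonpos, div_le_div_iff₀ (by positivity) (by positivity)]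
    nlinarith

noncomputable def boseCorrection (t : ℝ) : ℝ := exp (-t) * (1 / t - 1 / (exp t - 1))

theorem one_div_exp_sub_one_eq {t : ℝ} (ht : 0 < t) :
    1 / (exp t - 1) = exp (-t) / t + exp (-t) - boseCorrection t := by
  have hE := (exp_sub_one_pos ht).ne'
  rw [boseCorrection, Real.exp_neg]
  field_simp
  ring

theorem boseCorrection_nonneg {t : ℝ} (ht : 0 < t) : 0 ≤ boseCorrection t :=
  mul_nonneg (Real.exp_pos _).le (sub_nonneg.mpr (one_div_exp_sub_one_le_one_div ht))

theorem boseCorrection_le_exp_neg {t : ℝ} (ht : 0 < t) : boseCorrection t ≤ exp (-t) := by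
  refine mul_le_of_le_one_right (Real.exp_pos _).le ?_
  have hE := exp_sub_one_pos ht
  have hgap : exp t - 1 ≤ t * exp t := by
    have h := mul_le_mul_of_nonneg_left (Real.add_one_le_exp (-t)) (Real.exp_pos t).le
    rw [← Real.exp_add, add_neg_cancel, Real.exp_zero] at h
    linarith
  have hsum : 1 + 1 / (exp t - 1) = exp t / (exp t - 1) := by field_simp; ring
  rw [sub_le_iff_le_add, hsum, div_le_div_iff₀ ht hE]
  linarith

theorem antitoneOn_boseCorrection : AntitoneOn boseCorrection (Ioi 0) := fun _ hs _ ht hst =>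
  mul_le_mul (Real.exp_le_exp.mpr (neg_le_neg hst))
    (antitoneOn_one_div_sub_one_div_exp_sub_one hs ht hst)
    (sub_nonneg.mpr (one_div_exp_sub_one_le_one_div ht)) (Real.exp_pos _).le

theorem integrableOn_boseCorrection : IntegrableOn boseCorrection (Ioi 0) := by
  have hcont : ContinuousOn boseCorrection (Ioi 0) :=
    (Real.continuous_exp.comp continuous_neg).continuousOn.mul
      ((continuousOn_const.div continuousOn_id fun t ht => ne_of_gt ht).sub
        (continuousOn_const.div (by fun_prop) fun t ht => (exp_sub_one_pos ht).ne'))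
  refine Integrable.mono' (integrableOn_exp_neg_Ioi 0)
    (hcont.aestronglyMeasurable measurableSet_Ioi) ?_
  refine ae_restrict_of_forall_mem measurableSet_Ioi fun t (ht : 0 < t) => ?_
  rw [Real.norm_of_nonneg (boseCorrection_nonneg ht)]
  exact boseCorrection_le_exp_neg ht

theorem integral_boseCorrection : ∫ t in Ioi 0, boseCorrection t = 1 - eulerMascheroniConstant := by
  have hg : EqOn (fun t => 1 / (exp t - 1) - exp (-t) / t) (fun t => exp (-t) - boseCorrection t)
      (Ioi 0) := fun t ht => by
    simp only [one_div_exp_sub_one_eq ht]; ring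
  have hg_int : IntegrableOn (fun t => 1 / (exp t - 1) - exp (-t) / t) (Ioi 0) :=
    ((integrableOn_exp_neg_Ioi 0).sub integrableOn_boseCorrection).congr_fun hg.symm
      measurableSet_Ioi
  rw [← integral_exp_neg_Ioi_zero, ← integral_one_div_exp_sub_one_sub_exp_neg_div,
    ← integral_sub (integrableOn_exp_neg_Ioi 0) hg_int]
  refine setIntegral_congr_fun measurableSet_Ioi fun t ht => ?_
  simp only [hg ht]; ring

theorem hasSum_exp_neg_odd {ξ : ℝ} (hξ : 0 < ξ) :
    HasSum (fun k : ℕ => exp (-((2 * k + 1) * ξ))) (1 / (2 * sinh ξ)) := by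
  have hq : exp (-(2 * ξ)) < 1 := Real.exp_lt_one_iff.mpr (by linarith)
  have h := (hasSum_geometric_of_lt_one (Real.exp_pos _).le hq).mul_left (exp (-ξ))
  have hterm : ∀ k : ℕ, exp (-ξ) * exp (-(2 * ξ)) ^ k = exp (-((2 * k + 1) * ξ)) := fun k => by
    rw [← Real.exp_nat_mul, ← Real.exp_add]; ring_nf
  have hval : exp (-ξ) * (1 - exp (-(2 * ξ)))⁻¹ = 1 / (2 * sinh ξ) := by
    have hinv : exp ξ * exp (-ξ) = 1 := by rw [← Real.exp_add]; simp
    have hfac : 1 - exp (-(2 * ξ)) = exp (-ξ) * (exp ξ - exp (-ξ)) := by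
      have hsq : exp (-(2 * ξ)) = exp (-ξ) * exp (-ξ) := by rw [← Real.exp_add]; ring_nf
      rw [hsq]; linear_combination -hinv
    rw [hfac, Real.sinh_eq, mul_inv, ← mul_assoc, mul_inv_cancel₀ (Real.exp_pos _).ne', one_mul]
    ring
  simpa only [hterm, hval] using h

theorem log_one_add_exp_neg_sub_log_one_sub_exp_neg {ξ : ℝ} (hξ : 0 < ξ) :
    log (1 + exp (-ξ)) - log (1 - exp (-ξ)) = log (cosh (ξ / 2)) - log (sinh (ξ / 2)) := by
  have hhalf : exp (-(ξ / 2)) * exp (-(ξ / 2)) = exp (-ξ) := by rw [← Real.exp_add]; ring_nf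
  have hinv : exp (-(ξ / 2)) * exp (ξ / 2) = 1 := by rw [← Real.exp_add]; simp
  have hplus : 1 + exp (-ξ) = 2 * exp (-(ξ / 2)) * cosh (ξ / 2) := by
    rw [Real.cosh_eq]; linear_combination -hhalf - hinv
  have hminus : 1 - exp (-ξ) = 2 * exp (-(ξ / 2)) * sinh (ξ / 2) := by
    rw [Real.sinh_eq]; linear_combination hhalf - hinv
  have hsinh : 0 < sinh (ξ / 2) := Real.sinh_pos_iff.mpr (by linarith)
  rw [hplus, hminus, Real.log_mul (by positivity) (Real.cosh_pos _).ne',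
    Real.log_mul (by positivity) hsinh.ne']
  ring

theorem hasSum_exp_neg_odd_div {ξ : ℝ} (hξ : 0 < ξ) :
    HasSum (fun k : ℕ => exp (-((2 * k + 1) * ξ)) / ((2 * k + 1) * ξ))
      ((log (cosh (ξ / 2)) - log (sinh (ξ / 2))) / (2 * ξ)) := by
  have hq : |exp (-ξ)| < 1 := by
    rw [abs_of_pos (Real.exp_pos _)]; exact Real.exp_lt_one_iff.mpr (by linarith)
  have h := (Real.hasSum_log_sub_log_of_abs_lt_one hq).div_const (2 * ξ)
  rw [log_one_add_exp_neg_sub_log_one_sub_exp_neg hξ] at h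
  have hterm : (fun k : ℕ => exp (-((2 * k + 1) * ξ)) / ((2 * k + 1) * ξ)) =
      fun k : ℕ => 2 * (1 / (2 * (k : ℝ) + 1)) * exp (-ξ) ^ (2 * k + 1) / (2 * ξ) := by
    funext k
    rw [← Real.exp_nat_mul]
    push_cast
    field_simp
  rw [hterm]
  exact h

theorem summable_and_abs_two_mul_tsum_boseCorrection_odd_sub_le {ξ : ℝ} (hξ : 0 < ξ) :
    Summable (fun k : ℕ => boseCorrection ((2 * k + 1) * ξ)) ∧
      |2 * ξ * ∑' k : ℕ, boseCorrection ((2 * k + 1) * ξ) - (1 - eulerMascheroniConstant)| ≤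
        2 * ξ := by
  simpa [integral_boseCorrection] using
    antitoneOn_boseCorrection.summable_and_abs_two_mul_tsum_odd_sub_integral_le
      integrableOn_boseCorrection (fun t ht => boseCorrection_nonneg ht)
      (fun t (ht : 0 < t) => (boseCorrection_le_exp_neg ht).trans
        (Real.exp_le_one_iff.mpr (by linarith))) hξ

noncomputable def oddExpSum (ξ : ℝ) : ℝ := ∑' k : ℕ, 1 / (exp ((2 * k + 1) * ξ) - 1)

theorem hasSum_oddExpSum {ξ : ℝ} (hξ : 0 < ξ) :
    HasSum (fun k : ℕ => 1 / (exp ((2 * k + 1) * ξ) - 1))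
      ((log (cosh (ξ / 2)) - log (sinh (ξ / 2))) / (2 * ξ) + 1 / (2 * sinh ξ) -
        ∑' k : ℕ, boseCorrection ((2 * k + 1) * ξ)) := by
  have hterm : (fun k : ℕ => 1 / (exp ((2 * k + 1) * ξ) - 1)) = fun k : ℕ =>
      exp (-((2 * k + 1) * ξ)) / ((2 * k + 1) * ξ) + exp (-((2 * k + 1) * ξ)) -
        boseCorrection ((2 * k + 1) * ξ) :=
    funext fun k => one_div_exp_sub_one_eq (by positivity)
  rw [hterm]
  exact ((hasSum_exp_neg_odd_div hξ).add (hasSum_exp_neg_odd hξ)).sub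
    (summable_and_abs_two_mul_tsum_boseCorrection_odd_sub_le hξ).1.hasSum

theorem oddExpSum_nonneg {ξ : ℝ} (hξ : 0 ≤ ξ) : 0 ≤ oddExpSum ξ :=
  tsum_nonneg fun k => one_div_nonneg.mpr <| by
    linarith [Real.add_one_le_exp ((2 * k + 1) * ξ), show 0 ≤ ((2 * k + 1) * ξ) by positivity]

theorem oddExpSum_le_one_div_sq {ξ : ℝ} (h0 : 0 < ξ) (h1 : ξ ≤ 1) : oddExpSum ξ ≤ 1 / ξ ^ 2 := by
  have hterm : ∀ k : ℕ,
      1 / (exp ((2 * k + 1) * ξ) - 1) ≤ exp (-((2 * k + 1) * ξ)) * (1 / ξ + 1) := by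
    intro k
    have hy : ξ ≤ (2 * k + 1) * ξ :=
      le_mul_of_one_le_left h0.le (by linarith [k.cast_nonneg (α := ℝ)])
    rw [one_div_exp_sub_one_eq (h0.trans_le hy), mul_add, mul_one, ← div_eq_mul_one_div]
    have := boseCorrection_nonneg (h0.trans_le hy)
    have := div_le_div_of_nonneg_left (Real.exp_pos (-((2 * k + 1) * ξ))).le h0 hy
    linarith
  calc oddExpSum ξ ≤ 1 / (2 * sinh ξ) * (1 / ξ + 1) :=
        hasSum_le hterm (hasSum_oddExpSum h0).summable.hasSum ((hasSum_exp_neg_odd h0).mul_right _)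
    _ ≤ 1 / (2 * ξ) * (2 / ξ) := by
        gcongr
        · exact Real.self_le_sinh_iff.mpr h0.le
        · rw [le_div_iff₀ h0]; field_simp; linarith
    _ = 1 / ξ ^ 2 := by field_simp

theorem abs_sinh_sub_self_le {x : ℝ} (hx : |x| ≤ 1) : |sinh x - x| ≤ |x| ^ 3 := by
  have hpos := Real.exp_bound hx (n := 3) (by norm_num)
  have hneg := Real.exp_bound (x := -x) (by rwa [abs_neg]) (n := 3) (by norm_num)
  simp only [Finset.sum_range_succ, Finset.sum_range_zero, abs_neg] at hpos hneg
  norm_num [Nat.factorial] at hpos hneg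
  rw [Real.sinh_eq]
  have h3 : 0 ≤ |x| ^ 3 := by positivity
  rw [abs_le] at hpos hneg ⊢
  constructor <;> nlinarith [hpos.1, hpos.2, hneg.1, hneg.2]

theorem sinh_sub_self_le_pow_three {ξ : ℝ} (h0 : 0 ≤ ξ) (h1 : ξ ≤ 1) : sinh ξ - ξ ≤ ξ ^ 3 := by
  simpa [abs_of_nonneg h0] using
    (abs_le.mp (abs_sinh_sub_self_le (x := ξ) (by rwa [abs_of_nonneg h0]))).2

theorem abs_div_sinh_sub_one_le {ξ : ℝ} (h0 : 0 < ξ) (h1 : ξ ≤ 1) : |ξ / sinh ξ - 1| ≤ ξ := by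
  have hsinh : 0 < sinh ξ := Real.sinh_pos_iff.mpr h0
  have hξ_le_sinh : ξ ≤ sinh ξ := Real.self_le_sinh_iff.mpr h0.le
  rw [abs_sub_comm, abs_of_nonneg (by rw [sub_nonneg, div_le_one hsinh]; exact hξ_le_sinh),
    one_sub_div hsinh.ne', div_le_iff₀ hsinh]
  have hsq : ξ ^ 2 ≤ sinh ξ := by nlinarith
  nlinarith [sinh_sub_self_le_pow_three h0.le h1, mul_le_mul_of_nonneg_left hsq h0.le]

theorem abs_two_mul_sinh_sub_self_mul_oddExpSum_le {ξ : ℝ} (h0 : 0 < ξ) (h1 : ξ ≤ 1) :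
    |2 * (sinh ξ - ξ) * oddExpSum ξ| ≤ 2 * ξ := by
  have hsinh : 0 ≤ sinh ξ - ξ := sub_nonneg.mpr (Real.self_le_sinh_iff.mpr h0.le)
  rw [abs_of_nonneg (by have := oddExpSum_nonneg h0.le; positivity)]
  calc 2 * (sinh ξ - ξ) * oddExpSum ξ ≤ 2 * ξ ^ 3 * (1 / ξ ^ 2) := by
        gcongr
        · exact oddExpSum_nonneg h0.le
        · exact sinh_sub_self_le_pow_three h0.le h1
        · exact oddExpSum_le_one_div_sq h0 h1
    _ = 2 * ξ := by field_simp

theorem abs_two_mul_sinh_mul_oddExpSum_add_log_sinh_half_sub_le {ξ : ℝ} (h0 : 0 < ξ)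
    (h1 : ξ ≤ 1) :
    |2 * sinh ξ * oddExpSum ξ + log (sinh (ξ / 2)) - eulerMascheroniConstant| ≤ 6 * ξ := by
  obtain ⟨-, hriemann⟩ := summable_and_abs_two_mul_tsum_boseCorrection_odd_sub_le h0
  have hsum : oddExpSum ξ = _ := (hasSum_oddExpSum h0).tsum_eq
  generalize ∑' k : ℕ, boseCorrection ((2 * k + 1) * ξ) = U at hsum hriemann
  have hsplit : 2 * sinh ξ * oddExpSum ξ + log (sinh (ξ / 2)) - eulerMascheroniConstant =
      2 * (sinh ξ - ξ) * oddExpSum ξ + log (cosh (ξ / 2)) + (ξ / sinh ξ - 1) -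
        (2 * ξ * U - (1 - eulerMascheroniConstant)) := by
    have hsinh : sinh ξ ≠ 0 := (Real.sinh_pos_iff.mpr h0).ne'
    rw [hsum]
    field_simp
    ring
  have hlog_cosh : |log (cosh (ξ / 2))| ≤ ξ := by
    rw [abs_of_nonneg (Real.log_nonneg (Real.one_le_cosh _))]
    calc log (cosh (ξ / 2)) ≤ (ξ / 2) ^ 2 / 2 :=
          (Real.log_le_log (Real.cosh_pos _) (Real.cosh_le_exp_half_sq _)).trans_eq (Real.log_exp _)
      _ ≤ ξ := by nlinarith
  rw [hsplit]
  calc _ ≤ |2 * (sinh ξ - ξ) * oddExpSum ξ| + |log (cosh (ξ / 2))| + |ξ / sinh ξ - 1| +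
        |2 * ξ * U - (1 - eulerMascheroniConstant)| :=
        (abs_sub _ _).trans (add_le_add_left ((abs_add_le _ _).trans
          (add_le_add_left (abs_add_le _ _) _)) _)
    _ ≤ 6 * ξ := by
        linarith [abs_two_mul_sinh_sub_self_mul_oddExpSum_le h0 h1, abs_div_sinh_sub_one_le h0 h1]

theorem tsum_exp_div_add_tsum_one_div_eq_oddExpSum {ξ : ℝ} (hξ : 0 < ξ) :
    ∑' n : ℕ, exp ((2 * n + 1) * ξ) / (exp (2 * (2 * n + 1) * ξ) - 1) +
      ∑' n : ℕ, 1 / (exp (2 * (2 * n + 1) * ξ) - 1) = oddExpSum ξ := by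
  have hsum := (hasSum_oddExpSum hξ).summable
  have hE : ∀ n : ℕ, 1 < exp ((2 * n + 1) * ξ) := fun n => Real.one_lt_exp_iff.mpr (by positivity)
  have hsq : ∀ n : ℕ, exp (2 * (2 * n + 1) * ξ) = exp ((2 * n + 1) * ξ) ^ 2 := fun n => by
    rw [← Real.exp_nat_mul]; ring_nf
  have hfirst : ∀ n : ℕ, exp ((2 * n + 1) * ξ) / (exp (2 * (2 * n + 1) * ξ) - 1) ≤
      1 / (exp ((2 * n + 1) * ξ) - 1) := fun n => by
    have := hE n
    rw [hsq, div_le_div_iff₀ (by nlinarith) (by linarith)]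
    nlinarith
  have hsecond : ∀ n : ℕ, 1 / (exp (2 * (2 * n + 1) * ξ) - 1) ≤
      1 / (exp ((2 * n + 1) * ξ) - 1) := fun n => by
    have := hE n
    rw [hsq]
    exact one_div_le_one_div_of_le (by linarith) (by nlinarith)
  have hnonneg : ∀ n : ℕ, 0 < exp (2 * (2 * n + 1) * ξ) - 1 := fun n => by
    have := hE n; rw [hsq]; nlinarith
  rw [oddExpSum, ← Summable.tsum_add
    (hsum.of_nonneg_of_le (fun n => (div_pos (Real.exp_pos _) (hnonneg n)).le) hfirst)
    (hsum.of_nonneg_of_le (fun n => (one_div_pos.mpr (hnonneg n)).le) hsecond)]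
  refine tsum_congr fun n => ?_
  have := hE n
  rw [hsq, ← add_div, div_eq_div_iff (by nlinarith) (by linarith)]
  ring

theorem xi0_pos {r ε : ℝ} (hr : 0 < r) (hε : 0 < ε) : 0 < xi0 r ε := by
  rw [xi0, Real.arsinh_pos_iff, alphaTilde]
  positivity

theorem alphaTilde_eq_mul_sinh_xi0 {r : ℝ} (hr : r ≠ 0) (ε : ℝ) :
    alphaTilde r ε = r * sinh (xi0 r ε) := by
  rw [xi0, Real.sinh_arsinh, mul_div_cancel₀ _ hr]

theorem sinh_xi0_sq {r ε : ℝ} (hr : 0 < r) (hε : 0 ≤ ε) :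
    sinh (xi0 r ε) ^ 2 = ε * (r + ε / 4) / r ^ 2 := by
  rw [xi0, Real.sinh_arsinh, div_pow, alphaTilde, Real.sq_sqrt (by positivity)]

theorem sinh_half_xi0_sq {r ε : ℝ} (hr : 0 < r) (hε : 0 ≤ ε) :
    sinh (xi0 r ε / 2) ^ 2 = ε / (4 * r) := by
  have hcosh : cosh (xi0 r ε) = 1 + ε / (2 * r) := by
    rw [← Real.sqrt_sq (Real.cosh_pos _).le, Real.cosh_sq, sinh_xi0_sq hr hε,
      Real.sqrt_eq_iff_mul_self_eq (by positivity) (by positivity)]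
    field_simp
    ring
  have hdouble := Real.cosh_two_mul (xi0 r ε / 2)
  rw [mul_div_cancel₀ _ two_ne_zero, hcosh, Real.cosh_sq] at hdouble
  field_simp at hdouble ⊢
  linarith

theorem xi0_le_sqrt {r ε : ℝ} (hr : 0 < r) (hε : 0 ≤ ε) (hεr : ε ≤ 4 * r) :
    xi0 r ε ≤ √(2 * ε / r) := by
  have h0 : 0 ≤ xi0 r ε := Real.arsinh_nonneg_iff.mpr (by rw [alphaTilde]; positivity)
  refine Real.le_sqrt_of_sq_le ?_
  calc xi0 r ε ^ 2 ≤ sinh (xi0 r ε) ^ 2 :=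
        pow_le_pow_left₀ h0 (Real.self_le_sinh_iff.mpr h0) 2
    _ = ε * (r + ε / 4) / r ^ 2 := sinh_xi0_sq hr hε
    _ ≤ 2 * ε / r := by
        rw [div_le_div_iff₀ (by positivity) hr]
        nlinarith [mul_nonneg hε hr.le]

theorem rescaled_C11_sub_C12_sub_log_eq {r ε : ℝ} (hr : 0 < r) (hε : 0 < ε) :
    3 / (4 * π * r ^ 3) * (C11sym r ε - C12sym r ε) -
        3 / (2 * r ^ 2) * (log (r / ε) + 2 * eulerMascheroniConstant + 2 * log 2) =
      3 / r ^ 2 * (2 * sinh (xi0 r ε) * oddExpSum (xi0 r ε) + log (sinh (xi0 r ε / 2)) -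
        eulerMascheroniConstant) := by
  have hC : C11sym r ε - C12sym r ε = 8 * π * alphaTilde r ε * oddExpSum (xi0 r ε) := by
    rw [C11sym, C12sym, sub_neg_eq_add, ← mul_add,
      tsum_exp_div_add_tsum_one_div_eq_oddExpSum (xi0_pos hr hε)]
  have hlog : 2 * log (sinh (xi0 r ε / 2)) = log ε - 2 * log 2 - log r := by
    have h := Real.log_pow (sinh (xi0 r ε / 2)) 2
    rw [sinh_half_xi0_sq hr hε.le, Real.log_div hε.ne' (by positivity),
      Real.log_mul (by norm_num) hr.ne', show (4 : ℝ) = 2 ^ 2 by norm_num, Real.log_pow] at h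
    push_cast at h
    linarith
  rw [hC, alphaTilde_eq_mul_sinh_xi0 hr.ne', Real.log_div hr.ne' hε.ne']
  field_simp
  linear_combination (-4) * hlog

theorem rescaled_C11_sub_C12_asymptotics (r : ℝ) (hr : 0 < r) :
    (fun ε => 3 / (4 * π * r ^ 3) * (C11sym r ε - C12sym r ε) -
        3 / (2 * r ^ 2) *
          (Real.log (r / ε) + 2 * Real.eulerMascheroniConstant + 2 * Real.log 2))
      =O[𝓝[>] (0 : ℝ)] (fun ε => Real.sqrt ε) := by
  refine Asymptotics.IsBigO.of_bound (3 / r ^ 2 * 6 * √(2 / r)) ?_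
  filter_upwards [Ioo_mem_nhdsGT (show (0 : ℝ) < r / 2 by positivity)] with ε ⟨hε, hεr⟩
  have hξ_le : xi0 r ε ≤ √(2 / r) * √ε := by
    rw [← Real.sqrt_mul (by positivity), div_mul_eq_mul_div]
    exact xi0_le_sqrt hr hε.le (by linarith)
  have hξ1 : xi0 r ε ≤ 1 :=
    (xi0_le_sqrt hr hε.le (by linarith)).trans (Real.sqrt_le_one.mpr (by
      rw [div_le_one hr]; linarith))
  rw [rescaled_C11_sub_C12_sub_log_eq hr hε, norm_mul, Real.norm_of_nonneg (by positivity),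
    Real.norm_eq_abs, Real.norm_of_nonneg (Real.sqrt_nonneg _)]
  calc 3 / r ^ 2 * |_| ≤ 3 / r ^ 2 * (6 * xi0 r ε) := by
        gcongr
        exact abs_two_mul_sinh_mul_oddExpSum_add_log_sinh_half_sub_le (xi0_pos hr hε) hξ1
    _ ≤ 3 / r ^ 2 * (6 * (√(2 / r) * √ε)) := by gcongr
    _ = _ := by ring
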